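/- For 0 < σ ≤ 10⁻³ (earth-like oblateness), every c² ∈ [0,1] satisfies |k(c²,σ) − 1| ≤ 4σ, where k(c²,σ) = √(1 + σ(1/2 − (3/2)c²))/(1 − σ(1/2 − 3c²)). Consequently any rational resonance k = p/q with |p/q − 1| > 4σ admits no real inclination solution. -/

import Mathlib

/-!
Write `k = √(1 + x) / d` with `x = σ (1/2 - 3c²/2) ∈ [-σ, σ/2]` and `d = 1 - σ (1/2 - 3c²) > 0`.
The numerator is squeezed between `1 - σ` (as `(1 - σ)² ≤ 1 - σ ≤ 1 + x`) and the tangent line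
`1 + x/2`, and both `1 + x/2 ≤ (1 + 4σ) d` and `(1 - 4σ) d ≤ 1 - σ` are linear in `c²`, so they
only need checking at `c² = 0` and `c² = 1`, where they hold for `0 ≤ σ ≤ 1`.
-/

open Real

/-- The frequency ratio `k(c², σ)` of Eq. (22). -/
noncomputable def frequencyRatio (σ c2 : ℝ) : ℝ :=
  √(1 + σ * (1/2 - (3/2) * c2)) / (1 - σ * (1/2 - 3 * c2))

section

variable {σ c2 : ℝ}

theorem abs_frequencyRatio_sub_one_le (hσ0 : 0 ≤ σ) (hσ1 : σ ≤ 1) (hc2 : c2 ∈ Set.Icc (0:ℝ) 1) :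
    |frequencyRatio σ c2 - 1| ≤ 4 * σ := by
  obtain ⟨hc0, hc1⟩ := hc2
  -- Both bounds on the denominator below are nonnegative combinations of these four products.
  have h₁ : 0 ≤ σ * (1 - σ) * (1 - c2) :=
    mul_nonneg (mul_nonneg hσ0 (sub_nonneg.2 hσ1)) (sub_nonneg.2 hc1)
  have h₂ : 0 ≤ σ * (1 - c2) := mul_nonneg hσ0 (sub_nonneg.2 hc1)
  have h₃ : 0 ≤ σ * c2 := mul_nonneg hσ0 hc0
  have h₄ : 0 ≤ σ * σ * c2 := mul_nonneg (mul_nonneg hσ0 hσ0) hc0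
  have hd : 0 < 1 - σ * (1/2 - 3 * c2) := by linarith
  have hsqrt_le : √(1 + σ * (1/2 - (3/2) * c2)) ≤ 1 + σ * (1/2 - (3/2) * c2) / 2 :=
    sqrt_one_add_le (by linarith)
  have hle_sqrt : 1 - σ ≤ √(1 + σ * (1/2 - (3/2) * c2)) :=
    le_sqrt_of_sq_le (by nlinarith)
  unfold frequencyRatio
  rw [abs_le, le_sub_iff_add_le, sub_le_iff_le_add, le_div_iff₀ hd, div_le_iff₀ hd]
  constructor
  · calc (-(4 * σ) + 1) * (1 - σ * (1/2 - 3 * c2)) ≤ 1 - σ := by linarith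
      _ ≤ _ := hle_sqrt
  · calc _ ≤ 1 + σ * (1/2 - (3/2) * c2) / 2 := hsqrt_le
      _ ≤ (4 * σ + 1) * (1 - σ * (1/2 - 3 * c2)) := by linarith

theorem frequencyRatio_ne_of_four_mul_lt_abs_sub_one {r : ℝ} (hσ0 : 0 ≤ σ) (hσ1 : σ ≤ 1)
    (hc2 : c2 ∈ Set.Icc (0:ℝ) 1) (hr : 4 * σ < |r - 1|) : frequencyRatio σ c2 ≠ r := by
  rintro rfl
  exact (abs_frequencyRatio_sub_one_le hσ0 hσ1 hc2).not_gt hr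

end

theorem only_one_to_one_resonance_for_small_oblateness (σ : ℝ)
    (hσ0 : 0 < σ) (hσ1 : σ ≤ 1/1000) :
    (∀ c2 ∈ Set.Icc (0:ℝ) 1,
      |Real.sqrt (1 + σ * (1/2 - (3/2) * c2)) / (1 - σ * (1/2 - 3 * c2)) - 1| ≤ 4*σ) ∧
    (∀ p q : ℕ, 0 < q → |(p : ℝ)/(q : ℝ) - 1| > 4*σ →
      ¬ ∃ c2 ∈ Set.Icc (0:ℝ) 1,
        Real.sqrt (1 + σ * (1/2 - (3/2) * c2)) / (1 - σ * (1/2 - 3 * c2))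
          = (p : ℝ)/(q : ℝ)) := by
  have hσ1' : σ ≤ 1 := hσ1.trans (by norm_num)
  refine ⟨fun c2 hc2 => abs_frequencyRatio_sub_one_le hσ0.le hσ1' hc2, ?_⟩
  rintro p q - hfar ⟨c2, hc2, hk⟩
  exact frequencyRatio_ne_of_four_mul_lt_abs_sub_one hσ0.le hσ1' hc2 hfar hk
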